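/- arXiv:2503.09762 — 4 statements merged into one kernel-verified Lean document; each statement's English description precedes it below -/
import Mathlib

section
/- Let (X(t))_{t≥0} be a discrete-time Markov chain on a state space X, Φ : X → ℝ_{≥0}, and suppose there exist K, γ, δ > 0 and a time t₀ such that (i) for all x with Φ(x) > K, E_x[max{−δ, Φ(X(t₀)) − Φ(x)}] ≤ −γ, and (ii) there exists θ > 0 with θ·L₃(δ,θ,t₀) ≤ γ, where L₃(δ,θ,t₀) = sup_x E_x[(max{−δ, Φ(X(t₀))−Φ(x)})² · exp(θ(Φ(X(t₀))−Φ(x))⁺)]. Then for all x with Φ(x) > K, E_x[exp(θ(Φ(X(t₀)) − Φ(x)))] ≤ 1 − γθ/2; i.e., exp(θΦ(·)) is a geometric Lyapunov function with geometric drift size 1 − γθ/2, drift time t₀, and exception parameter e^{θK}. -/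
/-!
With `m = max (-δ) u ≥ u`, the second-order Taylor bound for the exponential gives pointwise
`exp (θ u) ≤ 1 + θ m + (θ m)² / 2 · exp (θ u⁺)`. Integrating against the law of `X(t₀)`, the
linear term contributes at most `-θγ` by the truncated drift and the quadratic one at most
`θ² L₃ / 2 ≤ θγ / 2`.
-/

open MeasureTheory Real

lemma exp_le_one_add_add_sq_div_two_of_nonpos {t : ℝ} (ht : t ≤ 0) :
    exp t ≤ 1 + t + t ^ 2 / 2 := by
  have hneg : 1 + -t + (-t) ^ 2 / 2 ≤ exp (-t) := quadratic_le_exp_of_nonneg (neg_nonneg.2 ht)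
  have hinv : exp t * exp (-t) = 1 := by rw [← exp_add, add_neg_cancel, exp_zero]
  -- `(1 + t + t²/2) (1 - t + t²/2) = 1 + t⁴/4 ≥ 1`
  nlinarith [exp_pos t, sq_nonneg (t ^ 2), mul_le_mul_of_nonneg_left hneg (exp_pos t).le]

lemma exp_le_one_add_add_sq_div_two_mul_exp_of_nonneg {t : ℝ} (ht : 0 ≤ t) :
    exp t ≤ 1 + t + t ^ 2 / 2 * exp t := by
  set g : ℝ → ℝ := fun s => (1 + s) * exp (-s) + s ^ 2 / 2
  have hg : ∀ s, HasDerivAt g (s * (1 - exp (-s))) s := by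
    intro s
    have := (((hasDerivAt_id s).const_add 1).mul (hasDerivAt_neg s).exp).add
      ((hasDerivAt_pow 2 s).div_const 2)
    exact this.congr_deriv (by simp only [id, Nat.cast_ofNat]; ring)
  have hmono : MonotoneOn g (Set.Ici 0) := by
    refine monotoneOn_of_hasDerivWithinAt_nonneg (convex_Ici 0)
      (fun s _ => (hg s).continuousAt.continuousWithinAt)
      (fun s _ => (hg s).hasDerivWithinAt) (fun s hs => ?_)
    rw [interior_Ici, Set.mem_Ioi] at hs
    exact mul_nonneg hs.le (sub_nonneg.2 (exp_le_one_iff.2 (by linarith)))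
  have h : g 0 ≤ g t := hmono Set.self_mem_Ici ht ht
  have hinv : exp (-t) * exp t = 1 := by rw [← exp_add, neg_add_cancel, exp_zero]
  simp only [g, add_zero, neg_zero, exp_zero, mul_one, ne_eq, OfNat.ofNat_ne_zero,
    not_false_eq_true, zero_pow, zero_div] at h
  nlinarith [exp_pos t, mul_le_mul_of_nonneg_right h (exp_pos t).le]

lemma exp_le_one_add_add_sq_div_two_mul_exp_max_of_le {a b : ℝ} (hab : a ≤ b) :
    exp a ≤ 1 + b + b ^ 2 / 2 * exp (max a 0) := by
  rcases le_or_gt a 0 with ha | ha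
  · rw [max_eq_right ha, exp_zero, mul_one]
    rcases le_or_gt b 0 with hb | hb
    · exact (exp_le_exp.2 hab).trans (exp_le_one_add_add_sq_div_two_of_nonpos hb)
    · nlinarith [exp_le_one_iff.2 ha, sq_nonneg b]
  · rw [max_eq_left ha.le]
    calc exp a ≤ 1 + a + a ^ 2 / 2 * exp a :=
          exp_le_one_add_add_sq_div_two_mul_exp_of_nonneg ha.le
      _ ≤ 1 + b + b ^ 2 / 2 * exp a := by gcongr

lemma exp_mul_le_of_max_neg {θ δ u : ℝ} (hθ : 0 ≤ θ) :
    exp (θ * u) ≤ 1 + θ * max (-δ) u + θ ^ 2 / 2 * (max (-δ) u ^ 2 * exp (θ * max u 0)) := by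
  have h := exp_le_one_add_add_sq_div_two_mul_exp_max_of_le
    (mul_le_mul_of_nonneg_left (le_max_right (-δ) u) hθ)
  rw [show max (θ * u) 0 = θ * max u 0 by rw [mul_max_of_nonneg _ _ hθ, mul_zero]] at h
  convert h using 2
  ring

section TruncatedDrift

variable {Ω : Type*} [MeasurableSpace Ω] {ν : Measure Ω} {D : Ω → ℝ} {δ θ : ℝ}

theorem integral_exp_mul_le_of_max_neg [IsProbabilityMeasure ν] (hθ : 0 ≤ θ)
    (hint1 : Integrable (fun ω => max (-δ) (D ω)) ν)
    (hint2 : Integrable (fun ω => max (-δ) (D ω) ^ 2 * exp (θ * max (D ω) 0)) ν) :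
    ∫ ω, exp (θ * D ω) ∂ν ≤ 1 + θ * ∫ ω, max (-δ) (D ω) ∂ν
      + θ ^ 2 / 2 * ∫ ω, max (-δ) (D ω) ^ 2 * exp (θ * max (D ω) 0) ∂ν := by
  have hint_lin : Integrable (fun ω => 1 + θ * max (-δ) (D ω)) ν :=
    (integrable_const 1).add (hint1.const_mul θ)
  have hint_sq : Integrable
      (fun ω => θ ^ 2 / 2 * (max (-δ) (D ω) ^ 2 * exp (θ * max (D ω) 0))) ν :=
    hint2.const_mul _
  calc ∫ ω, exp (θ * D ω) ∂ν
      ≤ ∫ ω, 1 + θ * max (-δ) (D ω)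
          + θ ^ 2 / 2 * (max (-δ) (D ω) ^ 2 * exp (θ * max (D ω) 0)) ∂ν :=
        integral_mono_of_nonneg (.of_forall fun ω => (exp_pos _).le) (hint_lin.add hint_sq)
          (.of_forall fun ω => exp_mul_le_of_max_neg hθ)
    _ = _ := by
        rw [integral_add hint_lin hint_sq,
          integral_add (integrable_const 1) (hint1.const_mul θ), integral_const_mul,
          integral_const_mul, integral_const, probReal_univ, one_smul]

theorem integral_exp_mul_le_one_sub_of_max_neg [IsProbabilityMeasure ν] {γ L : ℝ} (hθ : 0 ≤ θ)
    (hint1 : Integrable (fun ω => max (-δ) (D ω)) ν)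
    (hint2 : Integrable (fun ω => max (-δ) (D ω) ^ 2 * exp (θ * max (D ω) 0)) ν)
    (hdrift : ∫ ω, max (-δ) (D ω) ∂ν ≤ -γ)
    (hL : ∫ ω, max (-δ) (D ω) ^ 2 * exp (θ * max (D ω) 0) ∂ν ≤ L) (hθL : θ * L ≤ γ) :
    ∫ ω, exp (θ * D ω) ∂ν ≤ 1 - γ * θ / 2 := by
  have h := integral_exp_mul_le_of_max_neg hθ hint1 hint2
  nlinarith [mul_le_mul_of_nonneg_left hdrift hθ, mul_le_mul_of_nonneg_left hL (sq_nonneg θ),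
    mul_le_mul_of_nonneg_left hθL hθ]

end TruncatedDrift

-- `μ x` is the law of `X(t₀)` for the chain started at `x`.
theorem stmt5_general {X : Type*} [MeasurableSpace X]
    (μ : X → Measure X) (hprob : ∀ x, IsProbabilityMeasure (μ x))
    (Φ : X → ℝ)
    (K γ δ θ L3 : ℝ) (hθ : 0 < θ)
    (hint1 : ∀ x, Integrable (fun y => max (-δ) (Φ y - Φ x)) (μ x))
    (hint2 : ∀ x, Integrable
      (fun y => (max (-δ) (Φ y - Φ x)) ^ 2 * Real.exp (θ * max (Φ y - Φ x) 0)) (μ x))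
    (hdrift : ∀ x, K < Φ x → ∫ y, max (-δ) (Φ y - Φ x) ∂(μ x) ≤ -γ)
    (hL3 : ∀ x, ∫ y, (max (-δ) (Φ y - Φ x)) ^ 2 * Real.exp (θ * max (Φ y - Φ x) 0) ∂(μ x) ≤ L3)
    (hθL3 : θ * L3 ≤ γ) :
    ∀ x, K < Φ x → ∫ y, Real.exp (θ * (Φ y - Φ x)) ∂(μ x) ≤ 1 - γ * θ / 2 := by
  intro x hx
  have := hprob x
  exact integral_exp_mul_le_one_sub_of_max_neg hθ.le (hint1 x) (hint2 x) (hdrift x hx) (hL3 x)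
    hθL3

/-- From a negative `δ`-truncated drift and a bounded second-order exponential moment,
`exp (θ Φ(·))` is a geometric Lyapunov function: for every state `x` with `Φ x > K`,
`E_x[exp (θ (Φ(X(t₀)) − Φ x))] ≤ 1 − γθ/2`.  Here `μ x` is the law of `X(t₀)` started
from `x`, and `L3` bounds `E_x[(max{−δ, ΔΦ})² exp(θ (ΔΦ)⁺)]` uniformly in `x`. -/
theorem stmt5 {X : Type*} [MeasurableSpace X]
    (μ : X → Measure X) (hprob : ∀ x, IsProbabilityMeasure (μ x))
    (Φ : X → ℝ) (hΦ : ∀ x, 0 ≤ Φ x)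
    (K γ δ θ L3 : ℝ) (hK : 0 < K) (hγ : 0 < γ) (hδ : 0 < δ) (hθ : 0 < θ)
    (hint1 : ∀ x, Integrable (fun y => max (-δ) (Φ y - Φ x)) (μ x))
    (hint2 : ∀ x, Integrable
      (fun y => (max (-δ) (Φ y - Φ x)) ^ 2 * Real.exp (θ * max (Φ y - Φ x) 0)) (μ x))
    (hint3 : ∀ x, Integrable (fun y => Real.exp (θ * (Φ y - Φ x))) (μ x))
    (hdrift : ∀ x, K < Φ x → ∫ y, max (-δ) (Φ y - Φ x) ∂(μ x) ≤ -γ)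
    (hL3 : ∀ x, ∫ y, (max (-δ) (Φ y - Φ x)) ^ 2 * Real.exp (θ * max (Φ y - Φ x) 0) ∂(μ x) ≤ L3)
    (hθL3 : θ * L3 ≤ γ) :
    ∀ x, K < Φ x → ∫ y, Real.exp (θ * (Φ y - Φ x)) ∂(μ x) ≤ 1 - γ * θ / 2 :=
  stmt5_general μ hprob Φ K γ δ θ L3 hθ hint1 hint2 hdrift hL3 hθL3
end

section
/- Let q ∈ ℝⁿ_{≥0} be indexed by the nodes of a rooted tree with root r and node set A, and let ε_i, λ_i satisfy ε_i = λ_i − ∑_{j∈C(i)} ε_j with ε_i ≥ ε > 0 for all i. Define β_i(q) recursively by β_i(q) = 0 for leaves and β_i(q) = min{λ_i, ∑_{j∈C(i)}(λ_j + q_j − β_j(q))} otherwise. If ∑_{i ∈ A\{r}} q_i ≤ ε, then for every node i, β_i(q) = ∑_{j∈C(i)} ε_j − ∑_{j ∈ T⁻(i)} (−1)^{d(i,j)} q_j. -/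
/-- Closed form for the matching rates of the truncated tree priority policy under small
total queue length.  On a rooted tree with root `r`, children map `C`, strict-descendant
map `Tm`, and tree distance `d`, suppose `ε_i = λ_i − ∑_{j ∈ C i} ε_j ≥ ε > 0`, the
rates satisfy `β i = 0` for leaves and
`β i = min{λ_i, ∑_{j ∈ C i} (λ_j + q_j − β_j)}` otherwise, `q ≥ 0`, and
`∑_{i ≠ r} q_i ≤ ε`.  Then `β i = ∑_{j ∈ C i} ε_j − ∑_{j ∈ T⁻(i)} (−1)^{d(i,j)} q_j`
for every node `i`. -/
theorem stmt12 {ι : Type*} [Fintype ι] [DecidableEq ι]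
    (r : ι) (C Tm : ι → Finset ι) (d : ι → ι → ℕ)
    (lam e β q : ι → ℝ) (ε : ℝ) (hε : 0 < ε)
    (hTm : ∀ i, Tm i = (C i).biUnion (fun j => insert j (Tm j)))
    (hdisj : ∀ i, ∀ j ∈ C i, ∀ j' ∈ C i, j ≠ j' →
      Disjoint (insert j (Tm j)) (insert j' (Tm j')))
    (hself : ∀ i, i ∉ Tm i)
    (hd1 : ∀ i, ∀ j ∈ C i, d i j = 1)
    (hd2 : ∀ i, ∀ j ∈ C i, ∀ k ∈ Tm j, d i k = 1 + d j k)
    (hnotroot : ∀ i, r ∉ Tm i)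
    (he : ∀ i, e i = lam i - ∑ j ∈ C i, e j)
    (helb : ∀ i, ε ≤ e i)
    (hq : ∀ i, 0 ≤ q i)
    (hqsum : ∑ i ∈ Finset.univ.erase r, q i ≤ ε)
    (hβleaf : ∀ i, C i = ∅ → β i = 0)
    (hβ : ∀ i, C i ≠ ∅ → β i = min (lam i) (∑ j ∈ C i, (lam j + q j - β j))) :
    ∀ i, β i = ∑ j ∈ C i, e j - ∑ j ∈ Tm i, (-1 : ℝ) ^ (d i j) * q j := by
  -- preliminary facts
  have hsub : ∀ i, ∀ j ∈ C i, insert j (Tm j) ⊆ Tm i := by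
    intro i j hj
    rw [hTm i]
    exact Finset.subset_biUnion_of_mem (fun j => insert j (Tm j)) hj
  have hsplit : ∀ i (f : ι → ℝ),
      ∑ k ∈ Tm i, f k = ∑ j ∈ C i, ∑ k ∈ insert j (Tm j), f k := by
    intro i f
    rw [hTm i]
    exact Finset.sum_biUnion fun j hj j' hj' hne =>
      hdisj i j (by simpa using hj) j' (by simpa using hj') hne
  have hTmq : ∀ i, ∑ k ∈ Tm i, q k ≤ ε := by
    intro i
    refine le_trans (Finset.sum_le_sum_of_subset_of_nonneg ?_ (fun k _ _ => hq k)) hqsum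
    intro k hk
    refine Finset.mem_erase.2 ⟨?_, Finset.mem_univ k⟩
    rintro rfl
    exact hnotroot i hk
  have habs : ∀ i k, (-1 : ℝ) ^ (d i k) * q k ≤ q k := by
    intro i k
    rcases Nat.even_or_odd (d i k) with h | h
    · simp [h.neg_one_pow]
    · simp only [h.neg_one_pow, neg_one_mul]
      linarith [hq k]
  have main : ∀ n, ∀ i, (Tm i).card < n →
      β i = ∑ j ∈ C i, e j - ∑ j ∈ Tm i, (-1 : ℝ) ^ (d i j) * q j := by
    intro n
    induction n with
    | zero => intro i hi; omega
    | succ n IH =>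
      intro i hi
      by_cases hC : C i = ∅
      · have hTe : Tm i = ∅ := by rw [hTm i, hC]; simp
        simp [hβleaf i hC, hC, hTe]
      · have hcard : ∀ j ∈ C i, (Tm j).card < n := by
          intro j hj
          have h1 : (insert j (Tm j)).card ≤ (Tm i).card :=
            Finset.card_le_card (hsub i j hj)
          rw [Finset.card_insert_of_notMem (hself j)] at h1
          omega
        have hIH : ∀ j ∈ C i,
            β j = ∑ k ∈ C j, e k - ∑ k ∈ Tm j, (-1 : ℝ) ^ (d j k) * q k :=
          fun j hj => IH j (hcard j hj)
        -- rewrite the inner sum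
        have hterm : ∀ j ∈ C i,
            lam j + q j - β j
              = e j + (q j + ∑ k ∈ Tm j, (-1 : ℝ) ^ (d j k) * q k) := by
          intro j hj
          rw [hIH j hj, he j]
          ring
        have hXsum : ∑ j ∈ C i, (lam j + q j - β j)
            = ∑ j ∈ C i, e j
              + ∑ j ∈ C i, (q j + ∑ k ∈ Tm j, (-1 : ℝ) ^ (d j k) * q k) := by
          rw [Finset.sum_congr rfl hterm, Finset.sum_add_distrib]
        -- the RHS sum over Tm i
        have hRHS : ∑ k ∈ Tm i, (-1 : ℝ) ^ (d i k) * q k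
            = - ∑ j ∈ C i, (q j + ∑ k ∈ Tm j, (-1 : ℝ) ^ (d j k) * q k) := by
          rw [hsplit i, ← Finset.sum_neg_distrib]
          refine Finset.sum_congr rfl (fun j hj => ?_)
          rw [Finset.sum_insert (hself j), hd1 i j hj]
          have : ∀ k ∈ Tm j, (-1 : ℝ) ^ (d i k) * q k
              = - ((-1 : ℝ) ^ (d j k) * q k) := by
            intro k hk
            rw [hd2 i j hj k hk, pow_add]
            ring
          rw [Finset.sum_congr rfl this, Finset.sum_neg_distrib]
          ring
        -- bound on the perturbation
        have hQbound : ∑ j ∈ C i, (q j + ∑ k ∈ Tm j, (-1 : ℝ) ^ (d j k) * q k)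
            ≤ ε := by
          refine le_trans ?_ (hTmq i)
          rw [hsplit i q]
          refine Finset.sum_le_sum (fun j hj => ?_)
          rw [Finset.sum_insert (hself j)]
          exact add_le_add le_rfl (Finset.sum_le_sum (fun k _ => habs j k))
        have hmin : ∑ j ∈ C i, (lam j + q j - β j) ≤ lam i := by
          have := helb i
          have hlam : lam i = e i + ∑ j ∈ C i, e j := by
            have := he i; linarith
          rw [hXsum, hlam]
          linarith
        rw [hβ i hC, min_eq_right hmin, hXsum, hRHS]
        ring
  intro i
  exact main ((Tm i).card + 1) i (by omega)
end

section
/- Let β_i(q) be defined on a rooted tree by β_i(q) = 0 for leaves and β_i(q) = min{λ_i, ∑_{j∈C(i)}(λ_j + q_j − β_j(q))} otherwise, where λ_i ≥ 0 and q ∈ ℝⁿ_{≥0}. Define T_i(q) = ∑_{j ∈ T(i)} β_j(q), the total rate in the subtree rooted at i. Then for every node i, T_i is monotone non-decreasing in q: q' ≤ q componentwise implies T_i(q') ≤ T_i(q). -/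
/-- Monotonicity of the aggregate matching rate of the truncated tree priority policy.
On a rooted tree with children map `C` and subtree map `Ti` (`Ti i` = subtree rooted at
`i`, including `i`), with `λ ≥ 0` and rates defined by `β q i = 0` for leaves and
`β q i = min{λ_i, ∑_{j ∈ C i} (λ_j + q_j − β q j)}` otherwise, the total subtree rate
`T_i(q) = ∑_{j ∈ Ti i} β q j` is non-decreasing in `q`: `0 ≤ q' ≤ q` componentwise
implies `T_i(q') ≤ T_i(q)` for every node `i`. -/
theorem stmt13 {ι : Type*} [Fintype ι] [DecidableEq ι]
    (C Ti : ι → Finset ι) (lam : ι → ℝ)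
    (hlam : ∀ i, 0 ≤ lam i)
    (hTi : ∀ i, Ti i = insert i ((C i).biUnion Ti))
    (hnotmem : ∀ i, i ∉ (C i).biUnion Ti)
    (hdisj : ∀ i, ∀ j ∈ C i, ∀ j' ∈ C i, j ≠ j' → Disjoint (Ti j) (Ti j'))
    (β : (ι → ℝ) → ι → ℝ)
    (hβleaf : ∀ q : ι → ℝ, ∀ i, C i = ∅ → β q i = 0)
    (hβ : ∀ q : ι → ℝ, ∀ i, C i ≠ ∅ →
      β q i = min (lam i) (∑ j ∈ C i, (lam j + q j - β q j)))
    (q q' : ι → ℝ) (hq' : ∀ i, 0 ≤ q' i) (hle : ∀ i, q' i ≤ q i) :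
    ∀ i, ∑ j ∈ Ti i, β q' j ≤ ∑ j ∈ Ti i, β q j := by
  -- subtree sum expansion
  have hexp : ∀ (r : ι → ℝ) (i : ι), ∑ j ∈ Ti i, β r j
      = β r i + ∑ j ∈ C i, ∑ k ∈ Ti j, β r k := by
    intro r i
    rw [hTi i, Finset.sum_insert (hnotmem i), Finset.sum_biUnion]
    intro a ha b hb hab
    exact hdisj i a ha b hb hab
  have hcard : ∀ i, ∀ j ∈ C i, (Ti j).card < (Ti i).card := by
    intro i j hj
    have hsub : Ti j ⊆ (C i).biUnion Ti := fun x hx =>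
      Finset.mem_biUnion.mpr ⟨j, hj, hx⟩
    calc (Ti j).card ≤ ((C i).biUnion Ti).card := Finset.card_le_card hsub
      _ < (Ti i).card := by
          rw [hTi i, Finset.card_insert_of_notMem (hnotmem i)]; omega
  suffices h : ∀ n : ℕ, ∀ i, (Ti i).card ≤ n →
      ∑ j ∈ Ti i, β q' j ≤ ∑ j ∈ Ti i, β q j by
    intro i; exact h (Ti i).card i le_rfl
  intro n
  induction n with
  | zero =>
    intro i hi
    have hmem : i ∈ Ti i := by rw [hTi i]; exact Finset.mem_insert_self _ _
    have := Finset.card_pos.mpr ⟨i, hmem⟩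
    omega
  | succ n ih =>
    intro i hi
    by_cases hC : C i = ∅
    · rw [hexp q' i, hexp q i, hβleaf q' i hC, hβleaf q i hC, hC]
      simp
    · have hIH : ∀ j ∈ C i, ∑ k ∈ Ti j, β q' k ≤ ∑ k ∈ Ti j, β q k := by
        intro j hj
        exact ih j (by have := hcard i j hj; omega)
      have hS : ∀ j ∈ C i, ∀ k ∈ C j,
          ∑ l ∈ Ti k, β q' l ≤ ∑ l ∈ Ti k, β q l := by
        intro j hj k hk
        have h1 := hcard i j hj
        have h2 := hcard j k hk
        exact ih k (by omega)
      rw [hexp q' i, hexp q i, hβ q' i hC, hβ q i hC]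
      set A' := ∑ j ∈ C i, ∑ k ∈ Ti j, β q' k with hA'def
      set A := ∑ j ∈ C i, ∑ k ∈ Ti j, β q k with hAdef
      set B' := ∑ j ∈ C i, (lam j + q' j - β q' j) with hB'def
      set B := ∑ j ∈ C i, (lam j + q j - β q j) with hBdef
      have hA : A' ≤ A := Finset.sum_le_sum hIH
      have hBA : B' + A' ≤ B + A := by
        rw [hA'def, hAdef, hB'def, hBdef, ← Finset.sum_add_distrib,
          ← Finset.sum_add_distrib]
        apply Finset.sum_le_sum
        intro j hj
        have e1 := hexp q' j
        have e2 := hexp q j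
        have hSj : ∑ k ∈ C j, ∑ l ∈ Ti k, β q' l
            ≤ ∑ k ∈ C j, ∑ l ∈ Ti k, β q l :=
          Finset.sum_le_sum (fun k hk => hS j hj k hk)
        have := hle j
        linarith
      have m1 : min (lam i) B' ≤ lam i := min_le_left _ _
      have m2 : min (lam i) B' ≤ B' := min_le_right _ _
      have h3 : min (lam i) B + A = min (lam i + A) (B + A) := by
        rcases le_total (lam i) B with h | h
        · rw [min_eq_left h, min_eq_left (by linarith)]
        · rw [min_eq_right h, min_eq_right (by linarith)]
      rw [h3]
      exact le_min (by linarith) (by linarith)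
end

section
/- Let Ψ(t) be an adapted discrete-time stochastic process satisfying |Ψ(t+1) − Ψ(t)| ≤ K almost surely, E[Ψ(t+1) − Ψ(t) | F_t] ≤ −η whenever Ψ(t) ≥ B (with 0 < η ≤ K), and Ψ(0) ≤ K + B. Then for every t ≥ 0, E[Ψ(t)] ≤ K(1 + ⌈B/K⌉) + K(K − η)/(2η). -/
/-!
Compare `Ψ` with the reflected random walk on `B + Kℕ` that steps up by `K` with probability
`p = (K - η) / (2K)` and down with probability `q = (K + η) / (2K)`. By convexity of
`x ↦ (x - a)⁺`, an increment `δ ∈ [-K, K]` is dominated by the chord through `±K`; above `B`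
the drift condition turns the chord weights into `(q, p)`, since the correction term is
`ℱ t`-measurable times `δ + η`. Hence `f t j = E[(Ψ t - (B + jK))⁺]` obeys the recursion of the
walk, and by induction on `t` it stays below the walk's stationary profile `γ rʲ` with
`r = (K - η) / (K + η)` and `γ = K (K + η) / (2η)`. Then `E[Ψ t] ≤ B + f t 0 ≤ B + γ`.
-/

open MeasureTheory

lemma max_add_zero_le_chord {K δ : ℝ} (hK : 0 < K) (hδ : |δ| ≤ K) (u : ℝ) :
    max (u + δ) 0 ≤ ((K - δ) * max (u - K) 0 + (K + δ) * max (u + K) 0) / (2 * K) := by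
  obtain ⟨hδl, hδu⟩ := abs_le.mp hδ
  have hconv : ConvexOn ℝ Set.univ (fun x : ℝ => max x 0) :=
    (convexOn_id convex_univ).sup (convexOn_const 0 convex_univ)
  have key := hconv.2 (Set.mem_univ (u - K)) (Set.mem_univ (u + K))
    (div_nonneg (by linarith) (by linarith) : 0 ≤ (K - δ) / (2 * K))
    (div_nonneg (by linarith) (by linarith) : 0 ≤ (K + δ) / (2 * K))
    (by field_simp; ring)
  have hpt : (K - δ) / (2 * K) * (u - K) + (K + δ) / (2 * K) * (u + K) = u + δ := by
    field_simp; ring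
  simp only [smul_eq_mul, hpt] at key
  exact key.trans_eq (by field_simp)

lemma max_sub_zero_sub_max_sub_zero_mem_Icc (x a K : ℝ) (hK : 0 ≤ K) :
    max (x - (a - K)) 0 - max (x - (a + K)) 0 ∈ Set.Icc 0 (2 * K) := by
  constructor
  · exact sub_nonneg.2 (max_le_max (by linarith) le_rfl)
  · rw [sub_le_iff_le_add]
    exact max_le (by linarith [le_max_left (x - (a + K)) 0]) (by positivity)

-- `γ rʲ` is `E[(W - jK)⁺]` for the stationary law of the reflected walk with steps `+K` w.p. `p`
-- and `-K` w.p. `q`; with `c = K`, the two identities on `γ` and `r` are its balance equations.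
lemma le_mul_pow_of_reflected_recursion {p q r γ c : ℝ} (hp : 0 ≤ p) (hq : 0 ≤ q)
    (hγ : γ * r + c = γ) (hr : q * r ^ 2 + p = r) {f : ℕ → ℕ → ℝ}
    (h₀ : ∀ j, f 0 j ≤ γ * r ^ j) (hbot : ∀ t, f (t + 1) 0 ≤ f t 1 + c)
    (hstep : ∀ t j, f (t + 1) (j + 1) ≤ q * f t (j + 2) + p * f t j) :
    ∀ t j, f t j ≤ γ * r ^ j := by
  intro t
  induction t with
  | zero => exact h₀
  | succ t ih =>
    rintro (_ | j)
    · calc f (t + 1) 0 ≤ f t 1 + c := hbot t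
        _ ≤ γ * r ^ 1 + c := by gcongr; exact ih 1
        _ = γ * r ^ 0 := by rw [pow_one, pow_zero, mul_one, hγ]
    · calc f (t + 1) (j + 1) ≤ q * f t (j + 2) + p * f t j := hstep t j
        _ ≤ q * (γ * r ^ (j + 2)) + p * (γ * r ^ j) := by gcongr <;> exact ih _
        _ = γ * r ^ (j + 1) := by linear_combination γ * r ^ j * hr

section Integral

variable {Ω : Type*} {m m0 : MeasurableSpace Ω} {μ : Measure Ω}

lemma MeasureTheory.Integrable.max_sub_const_zero [IsFiniteMeasure μ] {X : Ω → ℝ}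
    (hX : Integrable X μ) (c : ℝ) : Integrable (fun ω => max (X ω - c) 0) μ :=
  (hX.sub (integrable_const c)).pos_part

lemma integral_le_add_integral_max_sub [IsProbabilityMeasure μ] {X : Ω → ℝ}
    (hX : Integrable X μ) (c : ℝ) : ∫ ω, X ω ∂μ ≤ c + ∫ ω, max (X ω - c) 0 ∂μ := by
  calc ∫ ω, X ω ∂μ ≤ ∫ ω, (c + max (X ω - c) 0) ∂μ :=
        integral_mono hX ((integrable_const c).add (hX.max_sub_const_zero c))
          fun ω => by linarith [le_max_left (X ω - c) 0]
    _ = c + ∫ ω, max (X ω - c) 0 ∂μ := by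
        rw [integral_add (integrable_const c) (hX.max_sub_const_zero c)]
        simp

lemma integral_max_sub_le_of_ae_le [IsProbabilityMeasure μ] {X : Ω → ℝ} {c d : ℝ}
    (hd : 0 ≤ d) (hX : ∀ᵐ ω ∂μ, X ω ≤ c + d) : ∫ ω, max (X ω - c) 0 ∂μ ≤ d := by
  calc ∫ ω, max (X ω - c) 0 ∂μ ≤ ∫ _, d ∂μ :=
        integral_mono_of_nonneg (.of_forall fun ω => le_max_right _ _) (integrable_const d)
          (hX.mono fun ω hω => max_le (by linarith) hd)
    _ = d := by simp

lemma integral_mul_le_of_condExp_le [IsFiniteMeasure μ] (hm : m ≤ m0) {g Δ : Ω → ℝ}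
    {c : ℝ} (hg : StronglyMeasurable[m] g) (hg0 : 0 ≤ g) (hgi : Integrable g μ)
    (hgΔ : Integrable (g * Δ) μ) (hΔ : Integrable Δ μ)
    (hc : ∀ᵐ ω ∂μ, g ω ≠ 0 → μ[Δ | m] ω ≤ c) :
    ∫ ω, g ω * Δ ω ∂μ ≤ c * ∫ ω, g ω ∂μ := by
  have hpull := condExp_mul_of_stronglyMeasurable_left hg hgΔ hΔ
  calc ∫ ω, g ω * Δ ω ∂μ = ∫ ω, (μ[g * Δ | m]) ω ∂μ := (integral_condExp hm).symm
    _ = ∫ ω, g ω * (μ[Δ | m]) ω ∂μ := integral_congr_ae hpull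
    _ ≤ ∫ ω, c * g ω ∂μ := by
        refine integral_mono_ae (integrable_condExp.congr hpull) (hgi.const_mul c) ?_
        filter_upwards [hc] with ω hω
        rcases eq_or_ne (g ω) 0 with h | h
        · simp [h]
        · rw [mul_comm c]
          exact mul_le_mul_of_nonneg_left (hω h) (hg0 ω)
    _ = c * ∫ ω, g ω ∂μ := integral_const_mul c _

end Integral

structure BoundedDriftStep {Ω : Type*} {m0 : MeasurableSpace Ω} (μ : Measure Ω)
    (m : MeasurableSpace Ω) (X Y : Ω → ℝ) (K η M : ℝ) : Prop where
  stronglyMeasurable : StronglyMeasurable[m] X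
  integrable_left : Integrable X μ
  integrable_right : Integrable Y μ
  abs_sub_le : ∀ᵐ ω ∂μ, |Y ω - X ω| ≤ K
  condExp_sub_le : ∀ᵐ ω ∂μ, M ≤ X ω → μ[fun ω' => Y ω' - X ω' | m] ω ≤ -η

namespace BoundedDriftStep

variable {Ω : Type*} {m m0 : MeasurableSpace Ω} {μ : Measure Ω} {X Y : Ω → ℝ} {K η M : ℝ}

lemma integral_max_sub_le [IsFiniteMeasure μ] (hs : BoundedDriftStep μ m X Y K η M)
    (hm : m ≤ m0) (hK : 0 < K) (a : ℝ) {h : Ω → ℝ} (hi : Integrable h μ)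
    (h_above : ∀ ω, M ≤ X ω → (K + η) / (2 * K) * max (X ω - (a + K)) 0 +
      (K - η) / (2 * K) * max (X ω - (a - K)) 0 ≤ h ω)
    (h_below : ∀ ω, X ω < M → max (X ω - (a - K)) 0 ≤ h ω) :
    ∫ ω, max (Y ω - a) 0 ∂μ ≤ ∫ ω, h ω ∂μ := by
  set S := {ω | M ≤ X ω}
  set A := fun ω => max (X ω - (a + K)) 0
  set C := fun ω => max (X ω - (a - K)) 0
  set Δ := fun ω => Y ω - X ω
  set g := S.indicator fun ω => C ω - A ω
  have hS : MeasurableSet[m] S :=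
    measurableSet_le measurable_const hs.stronglyMeasurable.measurable
  have hg_mem : ∀ ω, g ω ∈ Set.Icc 0 (2 * K) := fun ω => by
    by_cases hω : ω ∈ S
    · rw [show g ω = C ω - A ω from Set.indicator_of_mem hω _]
      exact max_sub_zero_sub_max_sub_zero_mem_Icc (X ω) a K hK.le
    · simp [g, hω, hK.le]
  have hg : StronglyMeasurable[m] g := by
    have hX := hs.stronglyMeasurable.measurable
    exact (((hX.sub_const _).max measurable_const).sub
      ((hX.sub_const _).max measurable_const)).stronglyMeasurable.indicator hS
  have hgi : Integrable g μ :=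
    ((hs.integrable_left.max_sub_const_zero _).sub
      (hs.integrable_left.max_sub_const_zero _)).indicator (hm _ hS)
  have hΔ : Integrable Δ μ := hs.integrable_right.sub hs.integrable_left
  have hgΔ : Integrable (fun ω => g ω * Δ ω) μ :=
    hΔ.bdd_mul (hg.mono hm).aestronglyMeasurable <| .of_forall fun ω => by
      rw [Real.norm_eq_abs, abs_of_nonneg (hg_mem ω).1]
      exact (hg_mem ω).2
  have hdrift : ∫ ω, g ω * Δ ω ∂μ ≤ -η * ∫ ω, g ω ∂μ := by
    refine integral_mul_le_of_condExp_le hm hg (fun ω => (hg_mem ω).1) hgi hgΔ hΔ ?_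
    filter_upwards [hs.condExp_sub_le] with ω hω hgω
    exact hω (by_contra fun hω' => hgω (Set.indicator_of_notMem (show ω ∉ S from hω') _))
  have hpt : ∀ᵐ ω ∂μ, max (Y ω - a) 0 ≤ h ω + (g ω * Δ ω + η * g ω) / (2 * K) := by
    filter_upwards [hs.abs_sub_le] with ω hω
    by_cases hωS : ω ∈ S
    · have hchord := max_add_zero_le_chord hK hω (X ω - a)
      rw [show X ω - a + (Y ω - X ω) = Y ω - a by ring,
        show X ω - a - K = X ω - (a + K) by ring,
        show X ω - a + K = X ω - (a - K) by ring] at hchord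
      calc max (Y ω - a) 0
          ≤ ((K - Δ ω) * A ω + (K + Δ ω) * C ω) / (2 * K) := hchord
        _ = ((K + η) / (2 * K) * A ω + (K - η) / (2 * K) * C ω) +
            (g ω * Δ ω + η * g ω) / (2 * K) := by
          rw [show g ω = C ω - A ω from Set.indicator_of_mem hωS _]
          field_simp
          ring
        _ ≤ h ω + (g ω * Δ ω + η * g ω) / (2 * K) := by gcongr; exact h_above ω hωS
    · have hbelow : max (Y ω - a) 0 ≤ C ω :=
        max_le_max (by linarith [(abs_le.mp hω).2]) le_rfl
      simpa [g, hωS] using hbelow.trans (h_below ω (not_le.mp hωS))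
  have hrest : Integrable (fun ω => (g ω * Δ ω + η * g ω) / (2 * K)) μ :=
    (hgΔ.add (hgi.const_mul η)).div_const _
  calc ∫ ω, max (Y ω - a) 0 ∂μ
      ≤ ∫ ω, (h ω + (g ω * Δ ω + η * g ω) / (2 * K)) ∂μ :=
        integral_mono_ae (hs.integrable_right.max_sub_const_zero a) (hi.add hrest) hpt
    _ = ∫ ω, h ω ∂μ + (∫ ω, g ω * Δ ω ∂μ + η * ∫ ω, g ω ∂μ) / (2 * K) := by
        rw [integral_add hi hrest, integral_div, integral_add hgΔ (hgi.const_mul η),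
          integral_const_mul]
    _ ≤ ∫ ω, h ω ∂μ := by
        have : ∫ ω, g ω * Δ ω ∂μ + η * ∫ ω, g ω ∂μ ≤ 0 := by linarith
        linarith [div_nonpos_of_nonpos_of_nonneg this (by positivity : (0 : ℝ) ≤ 2 * K)]

lemma integral_max_sub_le_at_level [IsProbabilityMeasure μ]
    (hs : BoundedDriftStep μ m X Y K η M) (hm : m ≤ m0) (hK : 0 < K) (hη : 0 ≤ η) (hηK : η ≤ K) :
    ∫ ω, max (Y ω - M) 0 ∂μ ≤ ∫ ω, max (X ω - (M + K)) 0 ∂μ + K := by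
  have hi : Integrable (fun ω => max (X ω - (M + K)) 0 + K) μ :=
    (hs.integrable_left.max_sub_const_zero (M + K)).add (integrable_const K)
  refine (hs.integral_max_sub_le hm hK M hi (fun ω _ => ?_) (fun ω hω => ?_)).trans_eq ?_
  · have hC := (max_sub_zero_sub_max_sub_zero_mem_Icc (X ω) M K hK.le).2
    have hp : 0 ≤ (K - η) / (2 * K) := div_nonneg (by linarith) (by positivity)
    calc (K + η) / (2 * K) * max (X ω - (M + K)) 0 +
          (K - η) / (2 * K) * max (X ω - (M - K)) 0
        ≤ (K + η) / (2 * K) * max (X ω - (M + K)) 0 +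
          (K - η) / (2 * K) * (max (X ω - (M + K)) 0 + 2 * K) := by gcongr; linarith
      _ = max (X ω - (M + K)) 0 + (K - η) := by field_simp; ring
      _ ≤ max (X ω - (M + K)) 0 + K := by linarith
  · exact max_le (by linarith) hK.le |>.trans (le_add_of_nonneg_left (le_max_right _ _))
  · rw [integral_add (hs.integrable_left.max_sub_const_zero _) (integrable_const K)]
    simp

lemma integral_max_sub_le_above_level [IsFiniteMeasure μ]
    (hs : BoundedDriftStep μ m X Y K η M) (hm : m ≤ m0) (hK : 0 < K) (hη : 0 ≤ η) {a : ℝ}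
    (ha : M + K ≤ a) :
    ∫ ω, max (Y ω - a) 0 ∂μ ≤ (K + η) / (2 * K) * ∫ ω, max (X ω - (a + K)) 0 ∂μ +
      (K - η) / (2 * K) * ∫ ω, max (X ω - (a - K)) 0 ∂μ := by
  have hA := (hs.integrable_left.max_sub_const_zero (a + K)).const_mul ((K + η) / (2 * K))
  have hC := (hs.integrable_left.max_sub_const_zero (a - K)).const_mul ((K - η) / (2 * K))
  have hi : Integrable (fun ω => (K + η) / (2 * K) * max (X ω - (a + K)) 0 +
      (K - η) / (2 * K) * max (X ω - (a - K)) 0) μ := hA.add hC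
  refine (hs.integral_max_sub_le hm hK a hi (fun _ _ => le_rfl) (fun ω hω => ?_)).trans_eq ?_
  · rw [max_eq_right (by linarith), mul_zero, add_zero]
    exact mul_nonneg (by positivity) (le_max_right _ _)
  · rw [integral_add hA hC, integral_const_mul, integral_const_mul]

end BoundedDriftStep

lemma integral_max_sub_le_geometric_of_boundedDriftStep {Ω : Type*} {m0 : MeasurableSpace Ω}
    {μ : Measure Ω} [IsProbabilityMeasure μ] {ℱ : ℕ → MeasurableSpace Ω} (hℱ : ∀ t, ℱ t ≤ m0)
    {Ψ : ℕ → Ω → ℝ} {K η B : ℝ} (hK : 0 < K) (hη : 0 < η) (hηK : η ≤ K)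
    (hstep : ∀ t, BoundedDriftStep μ (ℱ t) (Ψ t) (Ψ (t + 1)) K η B)
    (hinit : ∀ᵐ ω ∂μ, Ψ 0 ω ≤ B + K) (t j : ℕ) :
    ∫ ω, max (Ψ t ω - (B + j * K)) 0 ∂μ ≤ K * (K + η) / (2 * η) * ((K - η) / (K + η)) ^ j := by
  have hp : 0 ≤ (K - η) / (2 * K) := div_nonneg (by linarith) (by positivity)
  have hr : 0 ≤ (K - η) / (K + η) := div_nonneg (by linarith) (by positivity)
  have hγ : K ≤ K * (K + η) / (2 * η) := by rw [le_div_iff₀ (by positivity)]; nlinarith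
  refine le_mul_pow_of_reflected_recursion (q := (K + η) / (2 * K)) (r := (K - η) / (K + η))
    (γ := K * (K + η) / (2 * η)) (c := K)
    (f := fun t j => ∫ ω, max (Ψ t ω - (B + j * K)) 0 ∂μ) hp (by positivity) (by field_simp; ring)
    (by field_simp; ring) (fun j => ?_) (fun t => ?_) (fun t j => ?_) t j
  · rcases j with _ | j
    · simpa using (integral_max_sub_le_of_ae_le hK.le hinit).trans hγ
    · have hle : ∀ᵐ ω ∂μ, Ψ 0 ω ≤ B + ((j + 1 : ℕ) : ℝ) * K + 0 :=
        hinit.mono fun ω h => by push_cast; nlinarith [(Nat.cast_nonneg j : (0 : ℝ) ≤ j)]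
      exact (integral_max_sub_le_of_ae_le le_rfl hle).trans (by positivity)
  · simpa using (hstep t).integral_max_sub_le_at_level (hℱ t) hK hη.le hηK
  · have := (hstep t).integral_max_sub_le_above_level (hℱ t) hK hη.le
      (a := B + (j + 1) * K) (by nlinarith [(Nat.cast_nonneg j : (0 : ℝ) ≤ j)])
    rw [show B + (j + 1) * K + K = B + (j + 2) * K by ring,
      show B + (j + 1) * K - K = B + j * K by ring] at this
    push_cast
    exact this

theorem stmt17_general {Ω : Type*} {m0 : MeasurableSpace Ω} {μ : Measure Ω}
    [IsProbabilityMeasure μ]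
    (ℱ : Filtration ℕ m0) (Ψ : ℕ → Ω → ℝ)
    (hadapted : Adapted ℱ Ψ)
    (hint : ∀ t, Integrable (Ψ t) μ)
    (K B η : ℝ) (hK : 0 < K) (hη : 0 < η) (hηK : η ≤ K)
    (hbdd : ∀ t, ∀ᵐ ω ∂μ, |Ψ (t + 1) ω - Ψ t ω| ≤ K)
    (hdrift : ∀ t, ∀ᵐ ω ∂μ, B ≤ Ψ t ω →
      (μ[fun ω' => Ψ (t + 1) ω' - Ψ t ω' | ℱ t]) ω ≤ -η)
    (hinit : ∀ᵐ ω ∂μ, Ψ 0 ω ≤ K + B) :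
    ∀ t, ∫ ω, Ψ t ω ∂μ ≤ K * (1 + (⌈B / K⌉ : ℝ)) + K * ((K - η) / (2 * η)) := by
  have hstep (t : ℕ) : BoundedDriftStep μ (ℱ t) (Ψ t) (Ψ (t + 1)) K η B :=
    ⟨(hadapted t).stronglyMeasurable, hint t, hint (t + 1), hbdd t, hdrift t⟩
  intro t
  have hprofile := integral_max_sub_le_geometric_of_boundedDriftStep ℱ.le hK hη hηK hstep
    (hinit.mono fun ω h => h.trans_eq (add_comm K B)) t 0
  have hceil : B ≤ K * ⌈B / K⌉ := by
    have := (div_le_iff₀ hK).1 (Int.le_ceil (B / K))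
    linarith
  calc ∫ ω, Ψ t ω ∂μ ≤ B + ∫ ω, max (Ψ t ω - B) 0 ∂μ :=
        integral_le_add_integral_max_sub (hint t) B
    _ ≤ B + K * (K + η) / (2 * η) := by simpa using hprofile
    _ = B + K + K * ((K - η) / (2 * η)) := by field_simp; ring
    _ ≤ K * (1 + (⌈B / K⌉ : ℝ)) + K * ((K - η) / (2 * η)) := by linarith

/-- Drift bound for bounded-increment processes (Lemma 5 of Wei et al.):
if `Ψ` is adapted, `|Ψ(t+1) − Ψ(t)| ≤ K` a.s., `E[Ψ(t+1) − Ψ(t) | F_t] ≤ −η`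
whenever `Ψ(t) ≥ B` (with `0 < η ≤ K`, `B ≥ 0`), and `Ψ(0) ≤ K + B`, then
`E[Ψ(t)] ≤ K (1 + ⌈B/K⌉) + K (K − η)/(2η)` for every `t`. -/
theorem stmt17 {Ω : Type*} {m0 : MeasurableSpace Ω} {μ : Measure Ω}
    [IsProbabilityMeasure μ]
    (ℱ : Filtration ℕ m0) (Ψ : ℕ → Ω → ℝ)
    (hadapted : Adapted ℱ Ψ)
    (hint : ∀ t, Integrable (Ψ t) μ)
    (K B η : ℝ) (hK : 0 < K) (hη : 0 < η) (hηK : η ≤ K) (hB : 0 ≤ B)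
    (hbdd : ∀ t, ∀ᵐ ω ∂μ, |Ψ (t + 1) ω - Ψ t ω| ≤ K)
    (hdrift : ∀ t, ∀ᵐ ω ∂μ, B ≤ Ψ t ω →
      (μ[fun ω' => Ψ (t + 1) ω' - Ψ t ω' | ℱ t]) ω ≤ -η)
    (hinit : ∀ᵐ ω ∂μ, Ψ 0 ω ≤ K + B) :
    ∀ t, ∫ ω, Ψ t ω ∂μ ≤ K * (1 + (⌈B / K⌉ : ℝ)) + K * ((K - η) / (2 * η)) :=
  stmt17_general ℱ Ψ hadapted hint K B η hK hη hηK hbdd hdrift hinit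
end
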